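/- Let G, x₀, Y, λ, G⁺(Y) and the generic site set S_Y be as above. Then for any finite nonempty set U of vertices of G, max over u ∈ U of d_{G⁺(Y)}(x₀,u) equals max over y ∈ Y with cell_G(s_y,S_Y) ∩ U nonempty of ( λ(x₀,y) + max over u ∈ cell_G(s_y,S_Y) ∩ U of d_G(y,u) ). -/

import Mathlib

inductive DWalk {V : Type*} (A : V → V → Prop) : V → V → Type _ where
  | nil : (v : V) → DWalk A v v
  | cons : {u v w : V} → A u v → DWalk A v w → DWalk A u w

def DWalk.len {V : Type*} {A : V → V → Prop} (f : V → V → ℝ) :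
    ∀ {u w : V}, DWalk A u w → ℝ
  | _, _, .nil _ => 0
  | u, _, .cons (v := v) _ p => f u v + DWalk.len f p

def DWalk.support {V : Type*} {A : V → V → Prop} :
    ∀ {u w : V}, DWalk A u w → List V
  | u, _, .nil _ => [u]
  | u, _, .cons _ p => u :: DWalk.support p

def DWalk.lastArc {V : Type*} {A : V → V → Prop} :
    ∀ {u w : V}, DWalk A u w → Option (V × V)
  | _, _, .nil _ => none
  | u, _, .cons (v := v) _ p =>
      match DWalk.lastArc p with
      | none => some (u, v)
      | some pr => some pr

/-- Shortest-path distance: infimum of lengths of walks. -/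
noncomputable def ddist {V : Type*} (A : V → V → Prop) (f : V → V → ℝ) (s t : V) : ℝ :=
  sInf {x : ℝ | ∃ p : DWalk A s t, DWalk.len f p = x}


/-- The arc relation of `G⁺(Y)`: the new vertex `x₀` is modelled as `none`,
the vertices of `G` as `some v`; arcs go from `x₀` to each `y ∈ Y`. -/
def Aplus {V : Type*} (A : V → V → Prop) (Y : Set V) :
    Option V → Option V → Prop
  | some u, some v => A u v
  | none, some y => y ∈ Y
  | _, _ => False

/-- Arc lengths in `G⁺(Y)`: `lamb y` on the new arc `(x₀, y)`. -/
def lamplus {V : Type*} (lam : V → V → ℝ) (lamb : V → ℝ) :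
    Option V → Option V → ℝ
  | some u, some v => lam u v
  | none, some y => lamb y
  | _, _ => 0


/-- The graphic Voronoi cell of the site `s_y = (y, lamb y)` with respect to
the sites `S_Y = {(y, lamb y) : y ∈ Y}`. -/
def cellY {V : Type*} (A : V → V → Prop) (lam : V → V → ℝ)
    (Y : Finset V) (lamb : V → ℝ) (y : V) : Set V :=
  {x | ∀ y' ∈ Y, y' ≠ y →
    lamb y + ddist A lam y x ≤ lamb y' + ddist A lam y' x}

/-!
A walk from `x₀` in `G⁺(Y)` is an arc `(x₀, y)` followed by a walk of `G` from `y`, so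
`d_{G⁺(Y)}(x₀, u) = min_{y ∈ Y} (λ(x₀, y) + d_G(y, u))`, and the minimum is attained at the site
whose cell contains `u`. Grouping the vertices of `U` by the cells containing them turns the
maximum over `U` into a maximum over sites of maxima over cells. Shortest walks exist because,
without negative cycles, every walk can be shortened to one without repeated vertices, and
there are finitely many of those.
-/

theorem csSup_image_const_add {M : Type*} [ConditionallyCompleteLattice M] [AddGroup M]
    [AddLeftMono M] [AddRightMono M] (a : M) {s : Set M} (hs : s.Nonempty) (hb : BddAbove s) :
    sSup ((a + ·) '' s) = a + sSup s := by
  rw [← Set.singleton_add, csSup_add (Set.singleton_nonempty a) bddAbove_singleton hs hb,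
    csSup_singleton]

theorem csSup_image_eq_csSup_image_csSup_of_cover {α ι β : Type*}
    [ConditionallyCompleteLinearOrder β] {f : α → β} {s : Set α} {t : Set ι} {P : ι → Set α}
    (hs : s.Finite) (ht : t.Finite) (hcover : ∀ a ∈ s, ∃ i ∈ t, a ∈ P i)
    (hP : ∀ i ∈ t, (P i).Nonempty ∧ P i ⊆ s) :
    sSup (f '' s) = sSup ((fun i => sSup (f '' P i)) '' t) := by
  rcases s.eq_empty_or_nonempty with rfl | ⟨a₀, ha₀⟩
  · have ht₀ : t = ∅ := Set.eq_empty_of_forall_notMem fun i hi => by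
      obtain ⟨⟨a, ha⟩, hsub⟩ := hP i hi
      exact hsub ha
    simp [ht₀]
  have hbdd : ∀ i ∈ t, BddAbove (f '' P i) := fun i hi =>
    ((hs.subset (hP i hi).2).image f).bddAbove
  apply le_antisymm
  · refine csSup_le ⟨_, Set.mem_image_of_mem f ha₀⟩ ?_
    rintro _ ⟨a, ha, rfl⟩
    obtain ⟨i, hi, hai⟩ := hcover a ha
    exact (le_csSup (hbdd i hi) (Set.mem_image_of_mem f hai)).trans
      (le_csSup (ht.image _).bddAbove (Set.mem_image_of_mem _ hi))
  · obtain ⟨i₀, hi₀, -⟩ := hcover a₀ ha₀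
    refine csSup_le ⟨_, Set.mem_image_of_mem _ hi₀⟩ ?_
    rintro _ ⟨i, hi, rfl⟩
    exact csSup_le_csSup (hs.image f).bddAbove ((hP i hi).1.image f)
      (Set.image_mono (hP i hi).2)

namespace DWalk

variable {V : Type*} {A : V → V → Prop}

def append : ∀ {u v w : V}, DWalk A u v → DWalk A v w → DWalk A u w
  | _, _, _, .nil _, q => q
  | _, _, _, .cons h p, q => .cons h (p.append q)

theorem len_append (f : V → V → ℝ) :
    ∀ {u v w : V} (p : DWalk A u v) (q : DWalk A v w),
      (p.append q).len f = p.len f + q.len f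
  | _, _, _, .nil _, q => by simp [append, len]
  | _, _, _, .cons _ p, q => by simp only [append, len, len_append f p q]; ring

theorem support_eq_cons : ∀ {u w : V} (p : DWalk A u w), p.support = u :: p.support.tail
  | _, _, .nil _ => rfl
  | _, _, .cons _ _ => rfl

theorem support_append :
    ∀ {u v w : V} (p : DWalk A u v) (q : DWalk A v w),
      (p.append q).support = p.support ++ q.support.tail
  | _, _, _, .nil _, q => support_eq_cons q
  | _, _, _, .cons _ p, q => by simp [append, support, support_append p q]

theorem exists_eq_append_of_mem_support :
    ∀ {u w : V} (p : DWalk A u w) {v : V}, v ∈ p.support →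
      ∃ (c : DWalk A u v) (d : DWalk A v w), p = c.append d
  | _, _, .nil _, _, hv => by
      obtain rfl := List.mem_singleton.1 hv
      exact ⟨.nil _, .nil _, rfl⟩
  | _, _, .cons h p, _, hv => by
      rcases List.mem_cons.1 hv with rfl | hv
      · exact ⟨.nil _, .cons h p, rfl⟩
      · obtain ⟨c, d, rfl⟩ := exists_eq_append_of_mem_support p hv
        exact ⟨.cons h c, d, rfl⟩

section Shortening

variable {f : V → V → ℝ} (hf : ∀ (v : V) (c : DWalk A v v), 0 ≤ c.len f)
include hf

/-- Cutting out the closed subwalk between two visits of a vertex does not increase the length. -/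
theorem exists_shorter_of_not_nodup :
    ∀ {u w : V} (p : DWalk A u w), ¬ p.support.Nodup →
      ∃ q : DWalk A u w, q.support.length < p.support.length ∧ q.len f ≤ p.len f
  | _, _, .nil _, hp => absurd (List.nodup_singleton _) hp
  | u, _, .cons h p, hp => by
      by_cases hu : u ∈ p.support
      · obtain ⟨c, d, rfl⟩ := exists_eq_append_of_mem_support p hu
        have hcycle := hf u (.cons h c)
        have hc : c.support.length = c.support.tail.length + 1 := by
          rw [support_eq_cons c, List.length_cons, List.tail_cons]
        have hd : d.support.length = d.support.tail.length + 1 := by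
          rw [support_eq_cons d, List.length_cons, List.tail_cons]
        refine ⟨d, ?_, ?_⟩
        · simp only [support, support_append, List.length_cons, List.length_append]
          omega
        · simp only [len, len_append] at hcycle ⊢
          linarith
      · have hp' : ¬ p.support.Nodup := fun hnd => hp (List.nodup_cons.2 ⟨hu, hnd⟩)
        obtain ⟨q, hlt, hle⟩ := exists_shorter_of_not_nodup p hp'
        refine ⟨.cons h q, ?_, ?_⟩
        · simpa [support] using hlt
        · simpa [len] using hle

theorem exists_nodup_len_le {u w : V} (p : DWalk A u w) :
    ∃ q : DWalk A u w, q.support.Nodup ∧ q.len f ≤ p.len f := by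
  by_cases hp : p.support.Nodup
  · exact ⟨p, hp, le_rfl⟩
  · obtain ⟨q, hlt, hle⟩ := exists_shorter_of_not_nodup hf p hp
    obtain ⟨r, hr, hrq⟩ := exists_nodup_len_le q
    exact ⟨r, hr, hrq.trans hle⟩
termination_by p.support.length

end Shortening

def listLen (f : V → V → ℝ) : List V → ℝ
  | [] => 0
  | [_] => 0
  | a :: b :: l => f a b + listLen f (b :: l)

theorem len_eq_listLen (f : V → V → ℝ) :
    ∀ {u w : V} (p : DWalk A u w), p.len f = listLen f p.support
  | _, _, .nil _ => rfl
  | _, _, .cons _ p => by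
      rw [len, len_eq_listLen f p, support, support_eq_cons p, listLen]

theorem isLeast_ddist [Fintype V] {f : V → V → ℝ}
    (hf : ∀ (v : V) (c : DWalk A v v), 0 ≤ c.len f) {s t : V} (h : Nonempty (DWalk A s t)) :
    IsLeast {x | ∃ p : DWalk A s t, p.len f = x} (ddist A f s t) := by
  set N : Set ℝ := {x | ∃ p : DWalk A s t, p.support.Nodup ∧ p.len f = x}
  have hN : N.Finite := by
    refine ((List.finite_length_le V (Fintype.card V)).image (listLen f)).subset ?_
    rintro _ ⟨p, hp, rfl⟩
    exact ⟨p.support, hp.length_le_card, (len_eq_listLen f p).symm⟩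
  have hNne : N.Nonempty := by
    obtain ⟨q, hq, -⟩ := exists_nodup_len_le hf (Classical.choice h)
    exact ⟨_, q, hq, rfl⟩
  obtain ⟨p, -, hp⟩ := hNne.csInf_mem hN
  have hleast : IsLeast {x | ∃ p : DWalk A s t, p.len f = x} (sInf N) := by
    refine ⟨⟨p, hp⟩, ?_⟩
    rintro _ ⟨q, rfl⟩
    obtain ⟨r, hr, hrq⟩ := exists_nodup_len_le hf q
    exact (csInf_le hN.bddBelow ⟨r, hr, rfl⟩).trans hrq
  rw [ddist, hleast.csInf_eq]
  exact hleast

variable {W : Type*} {B : W → W → Prop}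

def map (g : V → W) (hg : ∀ u v, A u v → B (g u) (g v)) :
    ∀ {u w : V}, DWalk A u w → DWalk B (g u) (g w)
  | _, _, .nil u => .nil (g u)
  | _, _, .cons h p => .cons (hg _ _ h) (p.map g hg)

theorem len_map {g : V → W} {hg : ∀ u v, A u v → B (g u) (g v)} {f : V → V → ℝ}
    {f' : W → W → ℝ} (hf : ∀ u v, f' (g u) (g v) = f u v) :
    ∀ {u w : V} (p : DWalk A u w), (p.map g hg).len f' = p.len f
  | _, _, .nil _ => rfl
  | _, _, .cons _ p => by rw [map, len, len, hf, len_map hf p]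

end DWalk

open DWalk

section Extension

variable {V : Type*} {A : V → V → Prop} {lam : V → V → ℝ} {lamb : V → ℝ}

theorem exists_walk_of_walk_aplus {Y : Set V} :
    ∀ {a b : V} (p : DWalk (Aplus A Y) (some a) (some b)),
      ∃ q : DWalk A a b, q.len lam = p.len (lamplus lam lamb)
  | _, _, .nil _ => ⟨.nil _, rfl⟩
  | _, _, .cons (v := some _) h p => by
      obtain ⟨q, hq⟩ := exists_walk_of_walk_aplus p
      exact ⟨.cons h q, congrArg (lam _ _ + ·) hq⟩

theorem exists_walk_aplus_none_iff {Y : Set V} {u : V} {x : ℝ} :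
    (∃ p : DWalk (Aplus A Y) none (some u), p.len (lamplus lam lamb) = x) ↔
      ∃ y ∈ Y, ∃ q : DWalk A y u, lamb y + q.len lam = x := by
  constructor
  · rintro ⟨p, rfl⟩
    match p with
    | .cons (v := some y) hy p =>
      obtain ⟨q, hq⟩ := exists_walk_of_walk_aplus (lamb := lamb) p
      exact ⟨y, hy, q, by rw [hq]; rfl⟩
  · rintro ⟨y, hy, q, rfl⟩
    exact ⟨.cons (show Aplus A Y none (some y) from hy) (q.map (B := Aplus A Y) some fun _ _ h => h),
      congrArg (lamb y + ·) (len_map (fun _ _ => rfl) q)⟩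

theorem ddist_aplus_empty_none (u : V) :
    ddist (Aplus A ∅) (lamplus lam lamb) none (some u) = 0 := by
  have hempty : {x | ∃ p : DWalk (Aplus A ∅) none (some u), p.len (lamplus lam lamb) = x} = ∅ :=
    Set.eq_empty_of_forall_notMem fun x hx => by
      obtain ⟨y, hy, -⟩ := exists_walk_aplus_none_iff.1 hx
      exact hy
  rw [ddist, hempty, Real.sInf_empty]

theorem le_of_mem_cellY {Y : Finset V} {y y' u : V} (hu : u ∈ cellY A lam Y lamb y)
    (hy' : y' ∈ Y) : lamb y + ddist A lam y u ≤ lamb y' + ddist A lam y' u := by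
  rcases eq_or_ne y' y with rfl | hne
  · exact le_rfl
  · exact hu y' hy' hne

theorem exists_mem_cellY {Y : Finset V} (hY : Y.Nonempty) (u : V) :
    ∃ y ∈ Y, u ∈ cellY A lam Y lamb y := by
  obtain ⟨y, hy, hmin⟩ := Y.exists_min_image (fun y => lamb y + ddist A lam y u) hY
  exact ⟨y, hy, fun y' hy' _ => hmin y' hy'⟩

theorem ddist_aplus_none_of_mem_cellY [Fintype V]
    (hNoNeg : ∀ (v : V) (c : DWalk A v v), 0 ≤ c.len lam) {Y : Finset V}
    (hreach : ∀ y ∈ Y, ∀ u : V, Nonempty (DWalk A y u)) {y u : V} (hy : y ∈ Y)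
    (hu : u ∈ cellY A lam Y lamb y) :
    ddist (Aplus A ↑Y) (lamplus lam lamb) none (some u) = lamb y + ddist A lam y u := by
  refine IsLeast.csInf_eq ⟨?_, ?_⟩
  · obtain ⟨q, hq⟩ := (isLeast_ddist hNoNeg (hreach y hy u)).1
    exact exists_walk_aplus_none_iff.2 ⟨y, hy, q, by rw [hq]⟩
  · intro x hx
    obtain ⟨y', hy', q, rfl⟩ := exists_walk_aplus_none_iff.1 hx
    calc lamb y + ddist A lam y u ≤ lamb y' + ddist A lam y' u := le_of_mem_cellY hu hy'
      _ ≤ lamb y' + q.len lam := by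
          gcongr
          exact (isLeast_ddist hNoNeg (hreach y' hy' u)).2 ⟨q, rfl⟩

end Extension

theorem stmt15_general {V : Type*} [Fintype V] (A : V → V → Prop) (lam : V → V → ℝ)
    (hNoNeg : ∀ (v : V) (c : DWalk A v v), 0 ≤ DWalk.len lam c)
    (Y : Finset V) (lamb : V → ℝ)
    (hreach : ∀ y ∈ Y, ∀ u : V, Nonempty (DWalk A y u))
    (U : Finset V) :
    sSup ((fun u => ddist (Aplus A ↑Y) (lamplus lam lamb) none (some u)) '' ↑U)
      = sSup ((fun y => lamb y +
            sSup ((fun u => ddist A lam y u) '' (↑U ∩ cellY A lam Y lamb y))) ''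
          {y : V | y ∈ Y ∧ ((↑U : Set V) ∩ cellY A lam Y lamb y).Nonempty}) := by
  rcases Y.eq_empty_or_nonempty with rfl | hY
  -- Without sites `x₀` reaches nothing, and both sides are the junk value `sSup ∅ = sInf ∅ = 0`.
  · simp only [Finset.coe_empty, ddist_aplus_empty_none, Finset.notMem_empty, false_and,
      Set.ofPred_false, Set.image_empty, Real.sSup_empty]
    exact le_antisymm (Real.sSup_nonpos fun _ ⟨_, _, hx⟩ => hx.ge)
      (Real.sSup_nonneg fun _ ⟨_, _, hx⟩ => hx.le)
  rw [csSup_image_eq_csSup_image_csSup_of_cover (P := fun y => ↑U ∩ cellY A lam Y lamb y)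
    U.finite_toSet (Y.finite_toSet.subset fun _ (hy : _ ∧ _) => hy.1) ?_
    fun y (hy : _ ∧ _) => ⟨hy.2, Set.inter_subset_left⟩]
  · refine congrArg sSup (Set.image_congr fun y hy => ?_)
    have hD : (↑U ∩ cellY A lam Y lamb y).Finite := U.finite_toSet.inter_of_left _
    rw [← csSup_image_const_add _ (hy.2.image _) (hD.image _).bddAbove, Set.image_image]
    exact congrArg sSup (Set.image_congr fun u hu =>
      ddist_aplus_none_of_mem_cellY hNoNeg hreach hy.1 hu.2)
  · intro u hu
    obtain ⟨y, hy, hcell⟩ := exists_mem_cellY (lamb := lamb) hY u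
    exact ⟨y, ⟨hy, u, hu, hcell⟩, hu, hcell⟩

/-- the maximum over `u ∈ U` of `d_{G⁺(Y)}(x₀,u)` decomposes over
the sites `y ∈ Y` whose cell meets `U`. -/
theorem stmt15 {V : Type*} [Fintype V] (A : V → V → Prop) (lam : V → V → ℝ)
    (hNoNeg : ∀ (v : V) (c : DWalk A v v), 0 ≤ DWalk.len lam c)
    (Y : Finset V) (lamb : V → ℝ)
    (hcond : ∀ y ∈ Y, ∀ y' ∈ Y, y ≠ y' → lamb y < lamb y' + ddist A lam y' y)
    (hreach : ∀ y ∈ Y, ∀ u : V, Nonempty (DWalk A y u))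
    (hgen : ∀ x : V, ∀ y ∈ Y, ∀ y' ∈ Y, y ≠ y' →
      lamb y + ddist A lam y x ≠ lamb y' + ddist A lam y' x)
    (U : Finset V) (hU : U.Nonempty) :
    sSup ((fun u => ddist (Aplus A ↑Y) (lamplus lam lamb) none (some u)) '' ↑U)
      = sSup ((fun y => lamb y +
            sSup ((fun u => ddist A lam y u) '' (↑U ∩ cellY A lam Y lamb y))) ''
          {y : V | y ∈ Y ∧ ((↑U : Set V) ∩ cellY A lam Y lamb y).Nonempty}) :=
  stmt15_general A lam hNoNeg Y lamb hreach U
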